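/- The bar involution maps the defining ideal I(V) = ⊕_{n≥2} ker(S_n : V^{⊗n} → V^{⊗n}) onto itself; that is, its restriction is a 𝕂-linear automorphism of I(V). -/

import Mathlib

open scoped BigOperators TensorProduct

/-- The tensor algebra `T(V)` of a vector space `V` with basis `v_0, …, v_{N-1}`:
its basis is the set of words in the letters `v_i`, and multiplication is concatenation. -/
abbrev TV (K : Type*) [Field K] (N : ℕ) : Type _ := MonoidAlgebra K (FreeMonoid (Fin N))

section Ops

variable (K : Type*) [Field K] {N : ℕ}

/-- Swap the letters at (0-based) positions `k-1` and `k` of a list. -/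
def swapList {α : Type*} (l : List α) (k : ℕ) : List α :=
  match l[k-1]?, l[k]? with
  | some a, some b => (l.set (k - 1) b).set k a
  | _, _ => l

/-- The braiding coefficient `q_{ab}` for the letters at positions `k-1`, `k`. -/
def coefAt (q : Fin N → Fin N → K) (l : List (Fin N)) (k : ℕ) : K :=
  match l[k-1]?, l[k]? with
  | some a, some b => q a b
  | _, _ => 1

/-- The action of the braid-group generator `σ_k` (paper indexing) on tensor powers of `V`:
on a word `w` of length `n` with `1 ≤ k ≤ n-1` it swaps the letters at positions `k`, `k+1`
(1-based) and multiplies by the braiding coefficient. -/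
noncomputable def sigOp (q : Fin N → Fin N → K) (k : ℕ) : TV K N →ₗ[K] TV K N :=
  (MonoidAlgebra.coeffLinearEquiv K).symm.toLinearMap ∘ₗ
  Finsupp.lsum K (fun w =>
    if 1 ≤ k ∧ k < (FreeMonoid.toList w).length then
      Finsupp.lsingle (FreeMonoid.ofList (swapList (FreeMonoid.toList w) k)) ∘ₗ
        LinearMap.lsmul K K (coefAt K q (FreeMonoid.toList w) k)
    else Finsupp.lsingle w) ∘ₗ (MonoidAlgebra.coeffLinearEquiv K).toLinearMap

/-- The operator attached to a word `σ_{i₁}σ_{i₂}⋯σ_{i_r}` in the braid generators. -/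
noncomputable def wordOp (q : Fin N → Fin N → K) (l : List ℕ) : Module.End K (TV K N) :=
  (l.map (sigOp K q)).prod

/-- The right differential element `T_n = 1 + σ_{n−1} + σ_{n−1}σ_{n−2} + ⋯ + σ_{n−1}⋯σ_1`
acting on `V^{⊗n}`. -/
noncomputable def TOp (q : Fin N → Fin N → K) (n : ℕ) : Module.End K (TV K N) :=
  ∑ j ∈ Finset.range n, wordOp K q ((List.range' (n - j) j).reverse)

/-- The left differential element `U_n = 1 + σ_1 + σ_1σ_2 + ⋯ + σ_1σ_2⋯σ_{n−1}`
acting on `V^{⊗n}`. -/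
noncomputable def UOp (q : Fin N → Fin N → K) (n : ℕ) : Module.End K (TV K N) :=
  ∑ j ∈ Finset.range n, wordOp K q (List.range' 1 j)

/-- The right Dynkin element `P_n = (1 − σ_{n−1}⋯σ_1)(1 − σ_{n−1}⋯σ_2)⋯(1 − σ_{n−1})`. -/
noncomputable def POp (q : Fin N → Fin N → K) (n : ℕ) : Module.End K (TV K N) :=
  ((List.range' 1 (n - 1)).map (fun j =>
    1 - wordOp K q ((List.range' j (n - j)).reverse))).prod

/-- The left Dynkin element `Q_n = (1 − σ_1⋯σ_{n−1})(1 − σ_1⋯σ_{n−2})⋯(1 − σ_1)`. -/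
noncomputable def QOp (q : Fin N → Fin N → K) (n : ℕ) : Module.End K (TV K N) :=
  (((List.range' 1 (n - 1)).reverse).map (fun m =>
    1 - wordOp K q (List.range' 1 m))).prod

/-- `T_n' = (1 − σ_{n−1}²σ_{n−2}⋯σ_1)(1 − σ_{n−1}²σ_{n−2}⋯σ_2)⋯(1 − σ_{n−1}²)`. -/
noncomputable def TpOp (q : Fin N → Fin N → K) (n : ℕ) : Module.End K (TV K N) :=
  ((List.range' 1 (n - 1)).map (fun j =>
    1 - wordOp K q ((n - 1) :: (List.range' j (n - j)).reverse))).prod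

/-- `U_n' = (1 − σ_1²σ_2⋯σ_{n−1})(1 − σ_1²σ_2⋯σ_{n−2})⋯(1 − σ_1²)`, viewed inside the
operators on `V^{⊗m}` for any `m ≥ n` (standard inclusion `σ_i ↦ σ_i`). -/
noncomputable def UpOp (q : Fin N → Fin N → K) (n : ℕ) : Module.End K (TV K N) :=
  (((List.range' 1 (n - 1)).reverse).map (fun m =>
    1 - wordOp K q (1 :: List.range' 1 m))).prod

/-- `X_{m,n} = (1 − σ_{n−1}²σ_{n−2}⋯σ_{n−m})⋯(1 − σ_{n−1}²σ_{n−2})(1 − σ_{n−1}²)`;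
one has `X_{n-1,n} = T_n'` and `X_{n-2,n} = ι_{n-1}^n(T_{n-1}')`. -/
noncomputable def XOp (q : Fin N → Fin N → K) (n m : ℕ) : Module.End K (TV K N) :=
  ((List.range' (n - m) m).map (fun j =>
    1 - wordOp K q ((n - 1) :: (List.range' j (n - j)).reverse))).prod

/-- The list of generator indices of the Garside element
`Δ_n = (σ_1⋯σ_{n−1})(σ_1⋯σ_{n−2})⋯(σ_1σ_2)σ_1`. -/
def deltaList (n : ℕ) : List ℕ :=
  (((List.range (n - 1)).reverse).map (fun j => List.range' 1 (j + 1))).flatten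

/-- The Garside element `Δ_n` acting on `V^{⊗n}`. -/
noncomputable def deltaOp (q : Fin N → Fin N → K) (n : ℕ) : Module.End K (TV K N) :=
  wordOp K q (deltaList n)

/-- The central element `θ_n = Δ_n²` acting on `V^{⊗n}`. -/
noncomputable def thetaOp (q : Fin N → Fin N → K) (n : ℕ) : Module.End K (TV K N) :=
  deltaOp K q n ^ 2

/-- The degree-`n` component `V^{⊗n}` of the tensor algebra. -/
noncomputable def deg (N n : ℕ) : Submodule K (TV K N) :=
  (Finsupp.supported K K {w : FreeMonoid (Fin N) | (FreeMonoid.toList w).length = n}).comap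
    (MonoidAlgebra.coeffLinearEquiv K).toLinearMap

/-- The right differential operator `∂_i^R`: on a monomial `v_{f₁}⋯v_{f_n}` it is
`Σ_{k : f_k = i} (∏_{l>k} q_{i f_l}) · v_{f₁}⋯v̂_{f_k}⋯v_{f_n}`. -/
noncomputable def rdiff (q : Fin N → Fin N → K) (i : Fin N) : TV K N →ₗ[K] TV K N :=
  (MonoidAlgebra.coeffLinearEquiv K).symm.toLinearMap ∘ₗ
  Finsupp.lsum K (fun w =>
    ∑ k ∈ Finset.range (FreeMonoid.toList w).length,
      if (FreeMonoid.toList w)[k]? = some i then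
        Finsupp.lsingle (FreeMonoid.ofList ((FreeMonoid.toList w).eraseIdx k)) ∘ₗ
          LinearMap.lsmul K K
            ((((FreeMonoid.toList w).drop (k + 1)).map (fun a => q i a)).prod)
      else 0) ∘ₗ (MonoidAlgebra.coeffLinearEquiv K).toLinearMap

/-- The left differential operator `∂_i^L`: on a monomial `v_{f₁}⋯v_{f_n}` it is
`Σ_{k : f_k = i} (∏_{l<k} q_{f_l i}) · v_{f₁}⋯v̂_{f_k}⋯v_{f_n}`. -/
noncomputable def ldiff (q : Fin N → Fin N → K) (i : Fin N) : TV K N →ₗ[K] TV K N :=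
  (MonoidAlgebra.coeffLinearEquiv K).symm.toLinearMap ∘ₗ
  Finsupp.lsum K (fun w =>
    ∑ k ∈ Finset.range (FreeMonoid.toList w).length,
      if (FreeMonoid.toList w)[k]? = some i then
        Finsupp.lsingle (FreeMonoid.ofList ((FreeMonoid.toList w).eraseIdx k)) ∘ₗ
          LinearMap.lsmul K K
            ((((FreeMonoid.toList w).take k).map (fun a => q a i)).prod)
      else 0) ∘ₗ (MonoidAlgebra.coeffLinearEquiv K).toLinearMap

end Ops

/-- The bar involution on `T(V)`: the semilinear map fixing every monomial
`v_{i₁}⋯v_{i_n}` and applying the bar involution of the field to coefficients. -/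
noncomputable def barT (K : Type*) [Field K] {N : ℕ} (bar : K ≃+* K) (x : TV K N) :
    TV K N :=
  MonoidAlgebra.ofCoeff (Finsupp.mapRange (⇑bar) (map_zero bar) x.coeff)

/-- The transposition `s_i = (i, i+1)` of `𝔖_n` (paper indexing; `0`-based positions
`i-1` and `i`). -/
def swapPerm (n i : ℕ) : Equiv.Perm (Fin n) :=
  if h : 1 ≤ i ∧ i ≤ n - 1 then Equiv.swap ⟨i - 1, by omega⟩ ⟨i, by omega⟩ else 1

namespace Stmt17

open Finset

variable {K : Type*} [Field K] {N n : ℕ}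

/-- The set of inversions of a permutation. -/
def invSet {n : ℕ} (w : Equiv.Perm (Fin n)) : Finset (Fin n × Fin n) :=
  Finset.univ.filter fun p => p.1 < p.2 ∧ w p.2 < w p.1

lemma mem_invSet {w : Equiv.Perm (Fin n)} {p : Fin n × Fin n} :
    p ∈ invSet w ↔ p.1 < p.2 ∧ w p.2 < w p.1 := by simp [invSet]

lemma invSet_one : invSet (1 : Equiv.Perm (Fin n)) = ∅ := by
  ext p
  simp only [mem_invSet, Finset.notMem_empty, iff_false, not_and]
  intro h
  simp only [Equiv.Perm.one_apply]
  exact not_lt.2 h.le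

/-- The coefficient of the operator `T_w` on the monomial indexed by `f`. -/
def cf (q : Fin N → Fin N → K) {n : ℕ} (f : Fin n → Fin N)
    (w : Equiv.Perm (Fin n)) : K :=
  ∏ p ∈ invSet w, q (f p.1) (f p.2)

lemma swapPerm_def {n k : ℕ} (h1 : 1 ≤ k) (h2 : k ≤ n - 1) :
    swapPerm n k = Equiv.swap ⟨k - 1, by omega⟩ ⟨k, by omega⟩ := dif_pos ⟨h1, h2⟩

lemma swapPerm_mul_self (n k : ℕ) : swapPerm n k * swapPerm n k = 1 := by
  unfold swapPerm
  split_ifs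
  · exact Equiv.swap_mul_self _ _
  · exact one_mul 1

lemma swapPerm_inv (n k : ℕ) : (swapPerm n k)⁻¹ = swapPerm n k := by
  unfold swapPerm
  split_ifs
  · exact Equiv.swap_inv _ _
  · exact inv_one

lemma swapPerm_val {n k : ℕ} (h1 : 1 ≤ k) (h2 : k ≤ n - 1) (z : Fin n) :
    (swapPerm n k z : ℕ) =
      if (z : ℕ) = k - 1 then k else if (z : ℕ) = k then k - 1 else z := by
  have hk1 : k - 1 < n := by omega
  have hk : k < n := by omega
  rw [swapPerm_def h1 h2]
  by_cases hz1 : (z : ℕ) = k - 1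
  · rw [if_pos hz1, show z = ⟨k - 1, hk1⟩ from Fin.ext hz1, Equiv.swap_apply_left]
  · rw [if_neg hz1]
    by_cases hz2 : (z : ℕ) = k
    · rw [if_pos hz2, show z = ⟨k, hk⟩ from Fin.ext hz2, Equiv.swap_apply_right]
    · rw [if_neg hz2, Equiv.swap_apply_of_ne_of_ne]
      · exact fun h => hz1 (by rw [h])
      · exact fun h => hz2 (by rw [h])

lemma swapPerm_cases {n k : ℕ} (h1 : 1 ≤ k) (h2 : k ≤ n - 1) (z : Fin n) :
    ((z : ℕ) = k - 1 ∧ (swapPerm n k z : ℕ) = k) ∨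
      ((z : ℕ) = k ∧ (swapPerm n k z : ℕ) = k - 1) ∨
      ((z : ℕ) ≠ k - 1 ∧ (z : ℕ) ≠ k ∧ (swapPerm n k z : ℕ) = (z : ℕ)) := by
  have := swapPerm_val h1 h2 z
  split_ifs at this <;> tauto

lemma invSet_swap_mul {k : ℕ} (h1 : 1 ≤ k) (h2 : k ≤ n - 1)
    (hk1 : k - 1 < n) (hk : k < n) (w : Equiv.Perm (Fin n))
    (hab : w⁻¹ ⟨k - 1, hk1⟩ < w⁻¹ ⟨k, hk⟩) :
    (w⁻¹ ⟨k - 1, hk1⟩, w⁻¹ ⟨k, hk⟩) ∉ invSet w ∧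
      invSet (swapPerm n k * w) =
        insert (w⁻¹ ⟨k - 1, hk1⟩, w⁻¹ ⟨k, hk⟩) (invSet w) := by
  constructor
  · rw [mem_invSet]
    rintro ⟨-, hlt⟩
    rw [Equiv.Perm.coe_inv, Equiv.apply_symm_apply, Equiv.apply_symm_apply, Fin.mk_lt_mk] at hlt
    omega
  · ext ⟨i, j⟩
    have Di := swapPerm_cases h1 h2 (w i)
    have Dj := swapPerm_cases h1 h2 (w j)
    have hinj : (w i : ℕ) = (w j : ℕ) ↔ (i : ℕ) = (j : ℕ) := by
      rw [Fin.val_eq_val, Fin.val_eq_val, (Equiv.injective w).eq_iff]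
    have hia : (i : ℕ) = ((w⁻¹ ⟨k - 1, hk1⟩ : Fin n) : ℕ) ↔ (w i : ℕ) = k - 1 := by
      rw [Fin.val_eq_val, Equiv.Perm.eq_inv_iff_eq, Fin.ext_iff]
    have hib : (i : ℕ) = ((w⁻¹ ⟨k, hk⟩ : Fin n) : ℕ) ↔ (w i : ℕ) = k := by
      rw [Fin.val_eq_val, Equiv.Perm.eq_inv_iff_eq, Fin.ext_iff]
    have hja : (j : ℕ) = ((w⁻¹ ⟨k - 1, hk1⟩ : Fin n) : ℕ) ↔ (w j : ℕ) = k - 1 := by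
      rw [Fin.val_eq_val, Equiv.Perm.eq_inv_iff_eq, Fin.ext_iff]
    have hjb : (j : ℕ) = ((w⁻¹ ⟨k, hk⟩ : Fin n) : ℕ) ↔ (w j : ℕ) = k := by
      rw [Fin.val_eq_val, Equiv.Perm.eq_inv_iff_eq, Fin.ext_iff]
    have hab' : ((w⁻¹ ⟨k - 1, hk1⟩ : Fin n) : ℕ) < ((w⁻¹ ⟨k, hk⟩ : Fin n) : ℕ) := hab
    simp only [mem_invSet, Finset.mem_insert, Prod.mk.injEq, Equiv.Perm.mul_apply,
      Fin.lt_def, Fin.ext_iff]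
    omega

end Stmt17
namespace Stmt17

variable {K : Type*} [Field K] {N n : ℕ}

lemma swapPerm_apply_k1 {n k : ℕ} (h1 : 1 ≤ k) (h2 : k ≤ n - 1)
    (hk1 : k - 1 < n) (hk : k < n) :
    swapPerm n k ⟨k - 1, hk1⟩ = ⟨k, hk⟩ := by
  rw [swapPerm_def h1 h2]; exact Equiv.swap_apply_left _ _

lemma swapPerm_apply_k {n k : ℕ} (h1 : 1 ≤ k) (h2 : k ≤ n - 1)
    (hk1 : k - 1 < n) (hk : k < n) :
    swapPerm n k ⟨k, hk⟩ = ⟨k - 1, hk1⟩ := by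
  rw [swapPerm_def h1 h2]; exact Equiv.swap_apply_right _ _

/-- The "erase" version of `invSet_swap_mul`. -/
lemma invSet_swap_mul' {k : ℕ} (h1 : 1 ≤ k) (h2 : k ≤ n - 1)
    (hk1 : k - 1 < n) (hk : k < n) (w : Equiv.Perm (Fin n))
    (hba : w⁻¹ ⟨k, hk⟩ < w⁻¹ ⟨k - 1, hk1⟩) :
    (w⁻¹ ⟨k, hk⟩, w⁻¹ ⟨k - 1, hk1⟩) ∉ invSet (swapPerm n k * w) ∧
      invSet w =
        insert (w⁻¹ ⟨k, hk⟩, w⁻¹ ⟨k - 1, hk1⟩) (invSet (swapPerm n k * w)) := by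
  set w' := swapPerm n k * w with hw'
  have hinv : w'⁻¹ = w⁻¹ * swapPerm n k := by
    rw [hw', mul_inv_rev, swapPerm_inv]
  have ha' : w'⁻¹ ⟨k - 1, hk1⟩ = w⁻¹ ⟨k, hk⟩ := by
    rw [hinv, Equiv.Perm.mul_apply, swapPerm_apply_k1 h1 h2]
  have hb' : w'⁻¹ ⟨k, hk⟩ = w⁻¹ ⟨k - 1, hk1⟩ := by
    rw [hinv, Equiv.Perm.mul_apply, swapPerm_apply_k h1 h2]
  have hww : swapPerm n k * w' = w := by
    rw [hw', ← mul_assoc, swapPerm_mul_self, one_mul]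
  have := invSet_swap_mul h1 h2 hk1 hk w' (by rw [ha', hb']; exact hba)
  rw [ha', hb', hww] at this
  exact ⟨this.1, this.2⟩

lemma invSet_card_le (l : List ℕ) (hl : ∀ i ∈ l, 1 ≤ i ∧ i ≤ n - 1) :
    (invSet ((l.map (swapPerm n)).prod)).card ≤ l.length := by
  induction l with
  | nil => simp [invSet_one]
  | cons k l ih =>
    obtain ⟨h1, h2⟩ := hl k (List.mem_cons_self)
    have hk1 : k - 1 < n := by omega
    have hk : k < n := by omega
    have ihl := ih (fun i hi => hl i (List.mem_cons_of_mem _ hi))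
    set w := (l.map (swapPerm n)).prod with hw
    have hprod : ((k :: l).map (swapPerm n)).prod = swapPerm n k * w := by
      rw [List.map_cons, List.prod_cons]
    rw [hprod, List.length_cons]
    rcases lt_trichotomy (w⁻¹ ⟨k - 1, hk1⟩) (w⁻¹ ⟨k, hk⟩) with h | h | h
    · obtain ⟨hnot, heq⟩ := invSet_swap_mul h1 h2 hk1 hk w h
      rw [heq, Finset.card_insert_of_notMem hnot]
      omega
    · exact absurd (w⁻¹.injective h) (by simp [Fin.ext_iff]; omega)
    · obtain ⟨hnot, heq⟩ := invSet_swap_mul' h1 h2 hk1 hk w h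
      have : (invSet w).card = (invSet (swapPerm n k * w)).card + 1 := by
        rw [heq, Finset.card_insert_of_notMem hnot]
      omega

lemma perm_eq_one_of_strictMono (w : Equiv.Perm (Fin n)) (h : StrictMono w) :
    w = 1 := by
  have : ∀ x, w x = x := by
    intro x
    let e : Fin n ≃o Fin n := StrictMono.orderIsoOfSurjective w h w.surjective
    have he : e = OrderIso.refl (Fin n) := Subsingleton.elim _ _
    have : e x = x := by rw [he]; rfl
    exact this
  exact Equiv.ext this

lemma exists_reduced_word (w : Equiv.Perm (Fin n)) :
    ∃ l : List ℕ, (∀ i ∈ l, 1 ≤ i ∧ i ≤ n - 1) ∧ (l.map (swapPerm n)).prod = w ∧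
      l.length = (invSet w).card := by
  generalize hm : (invSet w).card = m
  induction m generalizing w with
  | zero =>
    refine ⟨[], by simp, ?_, by simp [hm]⟩
    have hmono : StrictMono w := by
      intro x y hxy
      rcases lt_trichotomy (w x) (w y) with h | h | h
      · exact h
      · exact absurd (w.injective h) (ne_of_lt hxy)
      · exfalso
        have : (x, y) ∈ invSet w := mem_invSet.2 ⟨hxy, h⟩
        rw [Finset.card_eq_zero.1 hm] at this
        exact absurd this (Finset.notMem_empty _)
    rw [List.map_nil, List.prod_nil, perm_eq_one_of_strictMono w hmono]
  | succ m ih =>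
    -- find a descent of w⁻¹
    have hdesc : ∃ k, 1 ≤ k ∧ k ≤ n - 1 ∧
        ∃ (hk1 : k - 1 < n) (hk : k < n), w⁻¹ ⟨k, hk⟩ < w⁻¹ ⟨k - 1, hk1⟩ := by
      by_contra hno
      push_neg at hno
      -- then w⁻¹ is strictly monotone on adjacent values, hence strictly monotone
      have hadj : ∀ k, 1 ≤ k → k ≤ n - 1 → ∀ (hk1 : k - 1 < n) (hk : k < n),
          w⁻¹ ⟨k - 1, hk1⟩ < w⁻¹ ⟨k, hk⟩ := by
        intro k hk1' hk2' hk1 hk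
        have hne : w⁻¹ ⟨k - 1, hk1⟩ ≠ w⁻¹ ⟨k, hk⟩ := by
          intro h
          have := w⁻¹.injective h
          simp [Fin.ext_iff] at this
          omega
        exact lt_of_le_of_ne (hno k hk1' hk2' hk1 hk) hne
      have hstep : ∀ d : ℕ, ∀ x y : Fin n, (y : ℕ) = (x : ℕ) + d + 1 →
          w⁻¹ x < w⁻¹ y := by
        intro d
        induction d with
        | zero =>
          intro x y hxy
          have h1 : 1 ≤ (y : ℕ) := by omega
          have h2 : (y : ℕ) ≤ n - 1 := by have := y.isLt; omega
          have hk1 : (y : ℕ) - 1 < n := by omega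
          have hx : x = ⟨(y : ℕ) - 1, hk1⟩ := Fin.ext (show (x : ℕ) = (y : ℕ) - 1 by omega)
          rw [hx]
          exact hadj (y : ℕ) h1 h2 hk1 y.isLt
        | succ d ihd =>
          intro x y hxy
          have hz : (x : ℕ) + d + 1 < n := by have := y.isLt; omega
          have h1 := ihd x ⟨(x : ℕ) + d + 1, hz⟩ rfl
          have h2 : w⁻¹ ⟨(x : ℕ) + d + 1, hz⟩ < w⁻¹ y := by
            have h1' : 1 ≤ (y : ℕ) := by omega
            have h2' : (y : ℕ) ≤ n - 1 := by have := y.isLt; omega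
            have hk1 : (y : ℕ) - 1 < n := by omega
            have hxx : (⟨(x : ℕ) + d + 1, hz⟩ : Fin n) = ⟨(y : ℕ) - 1, hk1⟩ :=
              Fin.ext (show (x : ℕ) + d + 1 = (y : ℕ) - 1 by omega)
            rw [hxx]
            exact hadj (y : ℕ) h1' h2' hk1 y.isLt
          exact h1.trans h2
      have hmono : StrictMono (w⁻¹ : Equiv.Perm (Fin n)) := by
        intro x y hxy
        exact hstep ((y : ℕ) - (x : ℕ) - 1) x y (by
          have := Fin.lt_def.1 hxy; omega)
      have : w⁻¹ = 1 := perm_eq_one_of_strictMono _ hmono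
      have hw1 : w = 1 := by
        rw [← inv_inv w, this, inv_one]
      rw [hw1, invSet_one] at hm
      simp at hm
    obtain ⟨k, h1, h2, hk1, hk, hd⟩ := hdesc
    obtain ⟨hnot, heq⟩ := invSet_swap_mul' h1 h2 hk1 hk w hd
    have hcard : (invSet (swapPerm n k * w)).card = m := by
      rw [heq, Finset.card_insert_of_notMem hnot] at hm
      omega
    obtain ⟨l, hlv, hlp, hll⟩ := ih (swapPerm n k * w) hcard
    refine ⟨k :: l, ?_, ?_, ?_⟩
    · intro i hi
      rcases List.mem_cons.1 hi with h | h
      · exact h ▸ ⟨h1, h2⟩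
      · exact hlv i h
    · rw [List.map_cons, List.prod_cons, hlp, ← mul_assoc, swapPerm_mul_self, one_mul]
    · rw [List.length_cons, hll]

lemma min_length_eq (l : List ℕ) (hl : ∀ i ∈ l, 1 ≤ i ∧ i ≤ n - 1)
    (hmin : ∀ l' : List ℕ, (∀ i ∈ l', 1 ≤ i ∧ i ≤ n - 1) →
      (l'.map (swapPerm n)).prod = (l.map (swapPerm n)).prod → l.length ≤ l'.length) :
    l.length = (invSet ((l.map (swapPerm n)).prod)).card := by
  obtain ⟨l0, h0v, h0p, h0len⟩ := exists_reduced_word ((l.map (swapPerm n)).prod)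
  refine le_antisymm ?_ (invSet_card_le l hl)
  calc l.length ≤ l0.length := hmin l0 h0v h0p
    _ = _ := h0len

end Stmt17
namespace Stmt17

variable {K : Type*} [Field K] {N n : ℕ}

lemma swapPerm_fix' {k : ℕ} (h1 : 1 ≤ k) (h2 : k ≤ n - 1) (i : ℕ) (hin : i < n)
    (hz1 : i ≠ k - 1) (hz2 : i ≠ k) : swapPerm n k ⟨i, hin⟩ = ⟨i, hin⟩ := by
  refine Fin.ext ?_
  rw [swapPerm_val h1 h2]
  simp only [if_neg hz1, if_neg hz2]

lemma swapList_ofFn {k : ℕ} (h1 : 1 ≤ k) (h2 : k ≤ n - 1) (g : Fin n → Fin N) :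
    swapList (List.ofFn g) k = List.ofFn (fun i => g (swapPerm n k i)) := by
  have hk1 : k - 1 < n := by omega
  have hk : k < n := by omega
  have e1 : (List.ofFn g)[k - 1]? = some (g ⟨k - 1, hk1⟩) := by
    simp [List.getElem?_ofFn, hk1]
  have e2 : (List.ofFn g)[k]? = some (g ⟨k, hk⟩) := by
    simp [List.getElem?_ofFn, hk]
  simp only [swapList, e1, e2]
  apply List.ext_getElem
  · simp
  · intro i hi hi'
    have hin : i < n := by simpa using hi'
    simp only [List.getElem_set, List.getElem_ofFn]
    split_ifs with hA hB
    · subst hA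
      exact (congrArg g (swapPerm_apply_k h1 h2 hk1 hk)).symm
    · have hkk : k - 1 = i := hB
      subst hkk
      exact (congrArg g (swapPerm_apply_k1 h1 h2 hk1 hk)).symm
    · exact (congrArg g (swapPerm_fix' h1 h2 i hin (fun h => hB h.symm)
        (fun h => hA h.symm))).symm

lemma coefAt_ofFn {k : ℕ} (h1 : 1 ≤ k) (h2 : k ≤ n - 1)
    (q : Fin N → Fin N → K) (g : Fin n → Fin N) :
    coefAt K q (List.ofFn g) k =
      q (g ⟨k - 1, by omega⟩) (g ⟨k, by omega⟩) := by
  have hk1 : k - 1 < n := by omega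
  have hk : k < n := by omega
  have e1 : (List.ofFn g)[k - 1]? = some (g ⟨k - 1, hk1⟩) := by
    simp [List.getElem?_ofFn, hk1]
  have e2 : (List.ofFn g)[k]? = some (g ⟨k, hk⟩) := by
    simp [List.getElem?_ofFn, hk]
  simp only [coefAt, e1, e2]

lemma sigOp_single {k : ℕ} (h1 : 1 ≤ k) (h2 : k ≤ n - 1)
    (q : Fin N → Fin N → K) (g : Fin n → Fin N) (c : K) :
    sigOp K q k (MonoidAlgebra.single (FreeMonoid.ofList (List.ofFn g)) c) =
      q (g ⟨k - 1, by omega⟩) (g ⟨k, by omega⟩) •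
        MonoidAlgebra.single (FreeMonoid.ofList (List.ofFn fun i => g (swapPerm n k i))) c := by
  have hk : k < n := by omega
  rw [sigOp, LinearMap.comp_apply, LinearMap.comp_apply]
  simp only [LinearEquiv.coe_coe, MonoidAlgebra.coeffLinearEquiv_apply, MonoidAlgebra.coeff_single]
  rw [Finsupp.lsum_single]
  rw [if_pos]
  · rw [LinearMap.comp_apply]
    rw [show FreeMonoid.toList (FreeMonoid.ofList (List.ofFn g)) = List.ofFn g from rfl]
    rw [swapList_ofFn h1 h2, coefAt_ofFn h1 h2]
    rw [LinearMap.lsmul_apply]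
    erw [Finsupp.lsingle_apply]
    rw [MonoidAlgebra.smul_single]
    rfl
  · rw [show FreeMonoid.toList (FreeMonoid.ofList (List.ofFn g)) = List.ofFn g from rfl]
    simp only [List.length_ofFn]
    exact ⟨h1, hk⟩

/-- Core computation: a minimal word acts on a degree-`n` monomial by permuting
the letters and multiplying by the product of `q` over the inversions. -/
lemma wordOp_single (q : Fin N → Fin N → K) (f : Fin n → Fin N)
    (l : List ℕ) (hl : ∀ i ∈ l, 1 ≤ i ∧ i ≤ n - 1)
    (hmin : ∀ l' : List ℕ, (∀ i ∈ l', 1 ≤ i ∧ i ≤ n - 1) →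
      (l'.map (swapPerm n)).prod = (l.map (swapPerm n)).prod → l.length ≤ l'.length) :
    wordOp K q l (MonoidAlgebra.single (FreeMonoid.ofList (List.ofFn f)) 1) =
      cf q f ((l.map (swapPerm n)).prod) •
        MonoidAlgebra.single (FreeMonoid.ofList
          (List.ofFn fun i => f (((l.map (swapPerm n)).prod)⁻¹ i))) 1 := by
  induction l with
  | nil =>
    simp [wordOp, cf, invSet_one, Module.End.one_apply]
  | cons k l ih =>
    obtain ⟨h1, h2⟩ := hl k (List.mem_cons_self)
    have hk1 : k - 1 < n := by omega
    have hk : k < n := by omega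
    have hlv : ∀ i ∈ l, 1 ≤ i ∧ i ≤ n - 1 := fun i hi => hl i (List.mem_cons_of_mem _ hi)
    have hmin' : ∀ l' : List ℕ, (∀ i ∈ l', 1 ≤ i ∧ i ≤ n - 1) →
        (l'.map (swapPerm n)).prod = (l.map (swapPerm n)).prod → l.length ≤ l'.length := by
      intro l' hv hp
      have := hmin (k :: l') (by
        intro i hi
        rcases List.mem_cons.1 hi with h | h
        · exact h ▸ ⟨h1, h2⟩
        · exact hv i h)
        (by rw [List.map_cons, List.prod_cons, hp, List.map_cons, List.prod_cons])
      simpa using this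
    have ihl := ih hlv hmin'
    set w' := (l.map (swapPerm n)).prod with hw'
    have hlen := min_length_eq (k :: l) hl hmin
    have hlen' := min_length_eq l hlv hmin'
    rw [← hw'] at hlen'
    have hprod : ((k :: l).map (swapPerm n)).prod = swapPerm n k * w' := by
      rw [List.map_cons, List.prod_cons]
    rw [hprod] at hlen ⊢
    rw [List.length_cons] at hlen
    rcases lt_trichotomy (w'⁻¹ ⟨k - 1, hk1⟩) (w'⁻¹ ⟨k, hk⟩) with hab | hab | hab
    · obtain ⟨hnot, hins⟩ := invSet_swap_mul h1 h2 hk1 hk w' hab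
      have hop : wordOp K q (k :: l) = sigOp K q k * wordOp K q l := by
        rw [wordOp, wordOp, List.map_cons, List.prod_cons]
      rw [hop, Module.End.mul_apply, ihl, map_smul,
        sigOp_single h1 h2 q (fun i => f (w'⁻¹ i)) 1, smul_smul]
      have hcf : cf q f (swapPerm n k * w') =
          cf q f w' * q (f (w'⁻¹ ⟨k - 1, hk1⟩)) (f (w'⁻¹ ⟨k, hk⟩)) := by
        rw [cf, hins, Finset.prod_insert hnot, mul_comm]
        rfl
      rw [hcf]
      have hfun : (fun i => f (w'⁻¹ (swapPerm n k i))) =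
          fun i => f ((swapPerm n k * w')⁻¹ i) := by
        funext i
        rw [mul_inv_rev, swapPerm_inv, Equiv.Perm.mul_apply]
      rw [hfun]
    · exact absurd (w'⁻¹.injective hab) (by simp [Fin.ext_iff]; omega)
    · obtain ⟨hnot, hins⟩ := invSet_swap_mul' h1 h2 hk1 hk w' hab
      have : (invSet w').card = (invSet (swapPerm n k * w')).card + 1 := by
        rw [hins, Finset.card_insert_of_notMem hnot]
      omega

end Stmt17
namespace Stmt17

variable {K : Type*} [Field K] {N n : ℕ}

lemma invSet_rev : invSet (Fin.revPerm : Equiv.Perm (Fin n)) =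
    Finset.univ.filter fun p => p.1 < p.2 := by
  ext p
  simp only [mem_invSet, Finset.mem_filter, Finset.mem_univ, true_and,
    Fin.revPerm_apply, Fin.rev_lt_rev, and_self]

lemma invSet_subset (w : Equiv.Perm (Fin n)) :
    invSet w ⊆ Finset.univ.filter fun p => p.1 < p.2 := by
  intro p hp
  simp only [Finset.mem_filter, Finset.mem_univ, true_and]
  exact (mem_invSet.1 hp).1

lemma invSet_rev_mul_compl (w : Equiv.Perm (Fin n)) :
    invSet (Fin.revPerm * w) =
      (Finset.univ.filter fun p : Fin n × Fin n => p.1 < p.2) \ invSet w := by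
  ext p
  simp only [mem_invSet, Finset.mem_sdiff, Finset.mem_filter, Finset.mem_univ, true_and,
    Equiv.Perm.mul_apply, Fin.revPerm_apply, Fin.rev_lt_rev]
  constructor
  · rintro ⟨h1, h2⟩
    exact ⟨h1, fun hc => lt_irrefl _ (h2.trans hc.2)⟩
  · rintro ⟨h1, h2⟩
    refine ⟨h1, ?_⟩
    have hne : w p.1 ≠ w p.2 := fun h => absurd (w.injective h) (ne_of_lt h1)
    rcases lt_or_ge (w p.1) (w p.2) with h | h
    · exact h
    · exact absurd ⟨h1, lt_of_le_of_ne h (Ne.symm hne)⟩ h2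

/-- The inversions of `w` and of `w₀ * w` partition all pairs. -/
lemma cf_mul_rev (q : Fin N → Fin N → K) (f : Fin n → Fin N) (w : Equiv.Perm (Fin n)) :
    cf q f w * cf q f (Fin.revPerm * w) = cf q f Fin.revPerm := by
  rw [cf, cf, cf, invSet_rev, invSet_rev_mul_compl]
  rw [mul_comm]
  exact Finset.prod_sdiff (invSet_subset w)

/-- Reindexing invariance of the total product over all pairs. -/
lemma cf_rev_comp (q : Fin N → Fin N → K) (hqs : ∀ i j, q i j = q j i)
    (f : Fin n → Fin N) (u : Equiv.Perm (Fin n)) :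
    cf q (fun i => f (u i)) Fin.revPerm = cf q f Fin.revPerm := by
  rw [cf, cf, invSet_rev]
  refine Finset.prod_nbij'
    (fun p => if u p.1 < u p.2 then (u p.1, u p.2) else (u p.2, u p.1))
    (fun p => if u⁻¹ p.1 < u⁻¹ p.2 then (u⁻¹ p.1, u⁻¹ p.2) else (u⁻¹ p.2, u⁻¹ p.1))
    ?_ ?_ ?_ ?_ ?_
  · intro p hp
    simp only [Finset.mem_filter, Finset.mem_univ, true_and] at hp ⊢
    have hne : u p.1 ≠ u p.2 := fun h => absurd (u.injective h) (ne_of_lt hp)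
    rcases lt_or_ge (u p.1) (u p.2) with h | h
    · rw [if_pos h]; exact h
    · rw [if_neg (not_lt.2 h)]; exact lt_of_le_of_ne h (Ne.symm hne)
  · intro p hp
    simp only [Finset.mem_filter, Finset.mem_univ, true_and] at hp ⊢
    have hne : u⁻¹ p.1 ≠ u⁻¹ p.2 := fun h => absurd (u⁻¹.injective h) (ne_of_lt hp)
    rcases lt_or_ge (u⁻¹ p.1) (u⁻¹ p.2) with h | h
    · rw [if_pos h]; exact h
    · rw [if_neg (not_lt.2 h)]; exact lt_of_le_of_ne h (Ne.symm hne)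
  · intro p hp
    simp only [Finset.mem_filter, Finset.mem_univ, true_and] at hp
    rcases lt_or_ge (u p.1) (u p.2) with h | h
    · rw [if_pos h]
      simp only [Equiv.Perm.coe_inv, Equiv.symm_apply_apply]
      rw [if_pos hp]
    · rw [if_neg (not_lt.2 h)]
      simp only [Equiv.Perm.coe_inv, Equiv.symm_apply_apply]
      rw [if_neg (not_lt.2 hp.le)]
  · intro p hp
    simp only [Finset.mem_filter, Finset.mem_univ, true_and] at hp
    rcases lt_or_ge (u⁻¹ p.1) (u⁻¹ p.2) with h | h
    · rw [if_pos h]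
      simp only [Equiv.Perm.coe_inv, Equiv.apply_symm_apply]
      rw [if_pos hp]
    · rw [if_neg (not_lt.2 h)]
      simp only [Equiv.Perm.coe_inv, Equiv.apply_symm_apply]
      rw [if_neg (not_lt.2 hp.le)]
  · intro p hp
    rcases lt_or_ge (u p.1) (u p.2) with h | h
    · rw [if_pos h]
    · rw [if_neg (not_lt.2 h)]
      exact hqs _ _

lemma cf_ne_zero (q : Fin N → Fin N → K) (hqne : ∀ i j, q i j ≠ 0)
    (f : Fin n → Fin N) (w : Equiv.Perm (Fin n)) : cf q f w ≠ 0 :=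
  Finset.prod_ne_zero_iff.2 fun _ _ => hqne _ _

end Stmt17
namespace Stmt17

variable {K : Type*} [Field K] {N n : ℕ}

section Bar

variable (bar : K ≃+* K)

lemma barT_single (w : FreeMonoid (Fin N)) (c : K) :
    barT K bar (MonoidAlgebra.single w c) = MonoidAlgebra.single w (bar c) := by
  rw [barT]
  exact congrArg MonoidAlgebra.ofCoeff Finsupp.mapRange_single

lemma barT_add (x y : TV K N) :
    barT K bar (x + y) = barT K bar x + barT K bar y := by
  rw [barT, barT, barT]
  exact congrArg MonoidAlgebra.ofCoeff (Finsupp.mapRange_add (map_add bar) x.coeff y.coeff)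

lemma barT_zero : barT K bar (0 : TV K N) = 0 := by
  rw [barT]
  exact congrArg MonoidAlgebra.ofCoeff Finsupp.mapRange_zero

lemma barT_smul (c : K) (x : TV K N) :
    barT K bar (c • x) = bar c • barT K bar x := by
  ext w
  simp only [barT, MonoidAlgebra.coeff_ofCoeff, Finsupp.mapRange_apply, MonoidAlgebra.coeff_smul,
    Finsupp.smul_apply, smul_eq_mul, map_mul]

lemma barT_sum {α : Type*} (s : Finset α) (F : α → TV K N) :
    barT K bar (∑ i ∈ s, F i) = ∑ i ∈ s, barT K bar (F i) :=
  map_sum (AddMonoidHom.mk' (barT K bar) (barT_add bar)) F s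

lemma barT_barT (hbar_inv : ∀ c, bar (bar c) = c) (x : TV K N) :
    barT K bar (barT K bar x) = x := by
  ext w
  simp only [barT, MonoidAlgebra.coeff_ofCoeff, Finsupp.mapRange_apply, hbar_inv]

end Bar

lemma revPerm_mul_self : (Fin.revPerm : Equiv.Perm (Fin n)) * Fin.revPerm = 1 := by
  ext i
  simp [Fin.rev_rev]

section Main

variable (q : Fin N → Fin N → K) (bar : K ≃+* K)
  (red : (n : ℕ) → Equiv.Perm (Fin n) → List ℕ)

lemma S_single
    (hred_mem : ∀ n w, ∀ i ∈ red n w, 1 ≤ i ∧ i ≤ n - 1)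
    (hred_prod : ∀ n w, ((red n w).map (swapPerm n)).prod = w)
    (hred_min : ∀ n w, ∀ l : List ℕ, (∀ i ∈ l, 1 ≤ i ∧ i ≤ n - 1) →
        (l.map (swapPerm n)).prod = w → (red n w).length ≤ l.length)
    (f : Fin n → Fin N) :
    (∑ w : Equiv.Perm (Fin n), wordOp K q (red n w))
        (MonoidAlgebra.single (FreeMonoid.ofList (List.ofFn f)) 1) =
      ∑ w : Equiv.Perm (Fin n), cf q f w •
        MonoidAlgebra.single (FreeMonoid.ofList (List.ofFn fun i => f (w⁻¹ i))) 1 := by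
  rw [LinearMap.sum_apply]
  refine Finset.sum_congr rfl fun w _ => ?_
  have hp := hred_prod n w
  have h := wordOp_single q f (red n w) (hred_mem n w)
    (fun l' hv hpr => hred_min n w l' hv (hpr.trans hp))
  rw [hp] at h
  exact h

lemma key_basis
    (hqbar : ∀ i j : Fin N, bar (q i j) = (q i j)⁻¹)
    (hqs : ∀ i j, q i j = q j i) (hqne : ∀ i j, q i j ≠ 0)
    (hred_mem : ∀ n w, ∀ i ∈ red n w, 1 ≤ i ∧ i ≤ n - 1)
    (hred_prod : ∀ n w, ((red n w).map (swapPerm n)).prod = w)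
    (hred_min : ∀ n w, ∀ l : List ℕ, (∀ i ∈ l, 1 ≤ i ∧ i ≤ n - 1) →
        (l.map (swapPerm n)).prod = w → (red n w).length ≤ l.length)
    (f : Fin n → Fin N) :
    (∑ w : Equiv.Perm (Fin n), wordOp K q (red n w))
        (MonoidAlgebra.single (FreeMonoid.ofList (List.ofFn f)) 1) =
      wordOp K q (red n Fin.revPerm)
        (barT K bar ((∑ w : Equiv.Perm (Fin n), wordOp K q (red n w))
          (MonoidAlgebra.single (FreeMonoid.ofList (List.ofFn f)) 1))) := by
  have hbarcf : ∀ w' : Equiv.Perm (Fin n), bar (cf q f w') = (cf q f w')⁻¹ := by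
    intro w'
    rw [cf, map_prod, ← Finset.prod_inv_distrib]
    exact Finset.prod_congr rfl fun p _ => hqbar _ _
  rw [S_single q red hred_mem hred_prod hred_min]
  rw [barT_sum, map_sum]
  have hterm : ∀ w : Equiv.Perm (Fin n),
      wordOp K q (red n Fin.revPerm)
        (barT K bar (cf q f w •
          MonoidAlgebra.single (FreeMonoid.ofList (List.ofFn fun i => f (w⁻¹ i))) 1)) =
      cf q f (Fin.revPerm * w) •
        MonoidAlgebra.single (FreeMonoid.ofList
          (List.ofFn fun i => f (((Fin.revPerm * w : Equiv.Perm (Fin n)))⁻¹ i))) 1 := by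
    intro w
    rw [barT_smul, barT_single, map_one, map_smul]
    have hD := wordOp_single (K := K) (N := N) q (fun i => f (w⁻¹ i)) (red n Fin.revPerm)
      (hred_mem n _)
      (fun l' hv hpr => hred_min n Fin.revPerm l' hv (hpr.trans (hred_prod n _)))
    rw [hred_prod n Fin.revPerm] at hD
    rw [hD, smul_smul, hbarcf]
    rw [cf_rev_comp q hqs f w⁻¹, ← cf_mul_rev q f w,
      inv_mul_cancel_left₀ (cf_ne_zero q hqne f w)]
    have hfun : (fun i => f (w⁻¹ ((Fin.revPerm : Equiv.Perm (Fin n))⁻¹ i))) =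
        fun i => f (((Fin.revPerm * w : Equiv.Perm (Fin n)))⁻¹ i) := by
      funext i
      rw [mul_inv_rev, Equiv.Perm.mul_apply]
    rw [hfun]
  refine Eq.trans ?_ (Finset.sum_congr rfl fun w _ => (hterm w).symm)
  exact (Fintype.sum_equiv (Equiv.mulLeft (Fin.revPerm : Equiv.Perm (Fin n)))
    _ _ (fun x => rfl)).symm

end Main

end Stmt17
namespace Stmt17

variable {K : Type*} [Field K] {N n : ℕ}

lemma exists_ofFn (w : FreeMonoid (Fin N)) (h : (FreeMonoid.toList w).length = n) :
    ∃ f : Fin n → Fin N, w = FreeMonoid.ofList (List.ofFn f) := by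
  refine ⟨fun i => (FreeMonoid.toList w).get ⟨(i : ℕ), by rw [h]; exact i.isLt⟩, ?_⟩
  have hlist : List.ofFn (fun i : Fin n =>
      (FreeMonoid.toList w).get ⟨(i : ℕ), by rw [h]; exact i.isLt⟩) =
      FreeMonoid.toList w := by
    apply List.ext_getElem
    · simp [h]
    · intro i h1 h2
      simp [List.getElem_ofFn, List.get_eq_getElem]
  rw [hlist]
  exact (FreeMonoid.ofList_toList w).symm

section Main2

variable (q : Fin N → Fin N → K) (bar : K ≃+* K)
  (red : (n : ℕ) → Equiv.Perm (Fin n) → List ℕ)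

lemma key_single
    (hqbar : ∀ i j : Fin N, bar (q i j) = (q i j)⁻¹)
    (hqs : ∀ i j, q i j = q j i) (hqne : ∀ i j, q i j ≠ 0)
    (hred_mem : ∀ n w, ∀ i ∈ red n w, 1 ≤ i ∧ i ≤ n - 1)
    (hred_prod : ∀ n w, ((red n w).map (swapPerm n)).prod = w)
    (hred_min : ∀ n w, ∀ l : List ℕ, (∀ i ∈ l, 1 ≤ i ∧ i ≤ n - 1) →
        (l.map (swapPerm n)).prod = w → (red n w).length ≤ l.length)
    (hbar_inv : ∀ c, bar (bar c) = c)
    (w : FreeMonoid (Fin N)) (hw : (FreeMonoid.toList w).length = n) (c : K) :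
    (∑ u : Equiv.Perm (Fin n), wordOp K q (red n u)) (MonoidAlgebra.single w c) =
      wordOp K q (red n Fin.revPerm)
        (barT K bar ((∑ u : Equiv.Perm (Fin n), wordOp K q (red n u))
          (barT K bar (MonoidAlgebra.single w c)))) := by
  obtain ⟨f, rfl⟩ := exists_ofFn w hw
  have hsingle : (MonoidAlgebra.single (FreeMonoid.ofList (List.ofFn f)) c : TV K N)
      = c • MonoidAlgebra.single (FreeMonoid.ofList (List.ofFn f)) 1 := by
    rw [MonoidAlgebra.smul_single, smul_eq_mul, mul_one]
  have h1 : barT K bar (MonoidAlgebra.single (FreeMonoid.ofList (List.ofFn f)) c : TV K N)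
      = bar c • MonoidAlgebra.single (FreeMonoid.ofList (List.ofFn f)) 1 := by
    rw [barT_single, MonoidAlgebra.smul_single, smul_eq_mul, mul_one]
  rw [h1, map_smul, barT_smul, hbar_inv, map_smul]
  rw [← key_basis q bar red hqbar hqs hqne hred_mem hred_prod hred_min f]
  rw [hsingle, map_smul]

lemma key_deg
    (hqbar : ∀ i j : Fin N, bar (q i j) = (q i j)⁻¹)
    (hqs : ∀ i j, q i j = q j i) (hqne : ∀ i j, q i j ≠ 0)
    (hred_mem : ∀ n w, ∀ i ∈ red n w, 1 ≤ i ∧ i ≤ n - 1)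
    (hred_prod : ∀ n w, ((red n w).map (swapPerm n)).prod = w)
    (hred_min : ∀ n w, ∀ l : List ℕ, (∀ i ∈ l, 1 ≤ i ∧ i ≤ n - 1) →
        (l.map (swapPerm n)).prod = w → (red n w).length ≤ l.length)
    (hbar_inv : ∀ c, bar (bar c) = c)
    (x : TV K N) (hx : x ∈ deg K N n) :
    (∑ u : Equiv.Perm (Fin n), wordOp K q (red n u)) x =
      wordOp K q (red n Fin.revPerm)
        (barT K bar ((∑ u : Equiv.Perm (Fin n), wordOp K q (red n u))
          (barT K bar x))) := by
  have hsupp : ∀ w ∈ x.coeff.support, (FreeMonoid.toList w).length = n := by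
    intro w hw
    exact (Finsupp.mem_supported K x.coeff).1 hx hw
  conv_lhs => rw [← MonoidAlgebra.sum_coeff_single x]
  conv_rhs => rw [← MonoidAlgebra.sum_coeff_single x]
  simp only [Finsupp.sum]
  rw [map_sum, barT_sum, map_sum, barT_sum, map_sum]
  exact Finset.sum_congr rfl fun w hw =>
    key_single q bar red hqbar hqs hqne hred_mem hred_prod hred_min hbar_inv
      w (hsupp w hw) (x.coeff w)

end Main2

end Stmt17

/-- with `K = 𝕂(q^{1/2})` (abstracted as a field `K` with an element `t`
playing the role of `q^{1/2}` and a bar involution with `bar t = t⁻¹`) and a symmetric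
braiding matrix `q_{ij} = t^{a_{ij}}`, the bar involution maps the defining ideal
`I(V) = ⊕_{n≥2} ker(S_n : V^{⊗n} → V^{⊗n})` onto itself; here each total symmetrizer
`S_n = Σ_{w ∈ 𝔖_n} T_w` is defined through any choice `red` of reduced expressions
(Matsumoto–Tits section). -/
theorem statement_17 (K : Type*) [Field K] [CharZero K] (N : ℕ) (hN : 1 ≤ N)
    (t : K) (ht : t ≠ 0)
    (bar : K ≃+* K) (hbar_inv : ∀ c : K, bar (bar c) = c) (hbar_t : bar t = t⁻¹)
    (a : Fin N → Fin N → ℤ) (ha : ∀ i j, a i j = a j i)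
    (q : Fin N → Fin N → K) (hq : ∀ i j, q i j = t ^ a i j)
    (red : (n : ℕ) → Equiv.Perm (Fin n) → List ℕ)
    (hred_mem : ∀ n w, ∀ i ∈ red n w, 1 ≤ i ∧ i ≤ n - 1)
    (hred_prod : ∀ n w, ((red n w).map (swapPerm n)).prod = w)
    (hred_min : ∀ n w, ∀ l : List ℕ, (∀ i ∈ l, 1 ≤ i ∧ i ≤ n - 1) →
        (l.map (swapPerm n)).prod = w → (red n w).length ≤ l.length) :
    barT K bar ''
        ((⨆ n : ℕ, ⨆ (_ : 2 ≤ n),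
          (deg K N n ⊓
            LinearMap.ker (∑ w : Equiv.Perm (Fin n), wordOp K q (red n w))) :
            Submodule K (TV K N)) : Set (TV K N)) =
      ((⨆ n : ℕ, ⨆ (_ : 2 ≤ n),
          (deg K N n ⊓
            LinearMap.ker (∑ w : Equiv.Perm (Fin n), wordOp K q (red n w))) :
            Submodule K (TV K N)) : Set (TV K N)) := by
  classical
  have hqs : ∀ i j, q i j = q j i := fun i j => by rw [hq i j, hq j i, ha i j]
  have hqne : ∀ i j, q i j ≠ 0 := fun i j => by rw [hq]; exact zpow_ne_zero _ ht
  have hqbar : ∀ i j, bar (q i j) = (q i j)⁻¹ := by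
    intro i j
    rw [hq, map_zpow₀, hbar_t, inv_zpow]
  have hstab : ∀ (m : ℕ) (x : TV K N),
      x ∈ deg K N m ⊓
        LinearMap.ker (∑ w : Equiv.Perm (Fin m), wordOp K q (red m w)) →
      barT K bar x ∈ deg K N m ⊓
        LinearMap.ker (∑ w : Equiv.Perm (Fin m), wordOp K q (red m w)) := by
    intro m x hx
    obtain ⟨hx1, hx2⟩ := Submodule.mem_inf.1 hx
    have hdeg : barT K bar x ∈ deg K N m := by
      rw [deg, Submodule.mem_comap, Finsupp.mem_supported] at hx1 ⊢
      refine Set.Subset.trans ?_ hx1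
      intro w hw
      have hsub := Finsupp.support_mapRange (f := ⇑bar) (hf := map_zero bar) (g := x.coeff)
      exact hsub hw
    refine Submodule.mem_inf.2 ⟨hdeg, ?_⟩
    rw [LinearMap.mem_ker] at hx2 ⊢
    have hkey := Stmt17.key_deg q bar red hqbar hqs hqne hred_mem hred_prod hred_min
      hbar_inv (barT K bar x) hdeg
    rw [hkey, Stmt17.barT_barT bar hbar_inv, hx2, Stmt17.barT_zero, map_zero]
  have hM : ∀ x ∈ (⨆ n : ℕ, ⨆ (_ : 2 ≤ n),
      (deg K N n ⊓
        LinearMap.ker (∑ w : Equiv.Perm (Fin n), wordOp K q (red n w))) :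
        Submodule K (TV K N)),
      barT K bar x ∈ (⨆ n : ℕ, ⨆ (_ : 2 ≤ n),
      (deg K N n ⊓
        LinearMap.ker (∑ w : Equiv.Perm (Fin n), wordOp K q (red n w))) :
        Submodule K (TV K N)) := by
    intro x hx
    refine Submodule.iSup_induction _ (motive := fun y => barT K bar y ∈ _) hx ?_ ?_ ?_
    · intro m y hy
      show barT K bar y ∈ _
      by_cases h2 : 2 ≤ m
      · rw [iSup_pos h2] at hy
        exact Submodule.mem_iSup_of_mem m (by rw [iSup_pos h2]; exact hstab m y hy)
      · rw [iSup_neg h2] at hy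
        rw [Submodule.mem_bot] at hy
        rw [hy, Stmt17.barT_zero]
        exact Submodule.zero_mem _
    · show barT K bar (0 : TV K N) ∈ _
      rw [Stmt17.barT_zero]
      exact Submodule.zero_mem _
    · intro u v hu hv
      show barT K bar (u + v) ∈ _
      rw [Stmt17.barT_add]
      exact Submodule.add_mem _ hu hv
  ext x
  simp only [Set.mem_image, SetLike.mem_coe]
  constructor
  · rintro ⟨y, hy, rfl⟩
    exact hM y hy
  · intro hx
    exact ⟨barT K bar x, hM x hx, Stmt17.barT_barT bar hbar_inv x⟩
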